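/- arXiv:2406.06506 — 6 statements merged into one kernel-verified Lean document; each statement's English description precedes it below -/
import Mathlib

section
/- Let K be a convex body containing the unit ball, ε ∈ (0,1/2), and ℓ : K → [0,1] convex. Then the extension e(x) = π̄(x)·ℓ(x/π̄(x)) + (π̄(x)-1)/ε, with π̄(x) = max(1, π(x)/(1-ε)), is a convex function on R^d. -/
open Metric Set Pointwise

/-!
Write `g(x, t) = t * ℓ(t⁻¹ • x)` for the perspective of `ℓ` and `π̄` for the convex function
`max 1 (gauge K · / (1 - ε))`. Since `g` is jointly convex on `{(x, t) : t⁻¹ • x ∈ K}`, we get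
`g(a • x + b • y, a π̄ x + b π̄ y) ≤ a g(x, π̄ x) + b g(y, π̄ y)`. To replace the second argument by the
smaller `π̄ (a • x + b • y)`, note that `t ↦ g(z, t)` can decrease by at most `1/ε` per unit: the
point `(z, s)` is a convex combination of `(z, t)` and `(z, (1 - ε) s)`, and `0 ≤ ℓ ≤ 1`. The
linear term `π̄ / ε` pays exactly for this loss.
-/

section Perspective

variable {E : Type*} [AddCommGroup E] [Module ℝ E]

noncomputable def perspective (f : E → ℝ) (x : E) (t : ℝ) : ℝ := t * f (t⁻¹ • x)

theorem ConvexOn.perspective_combo_le {K : Set E} {f : E → ℝ} (hf : ConvexOn ℝ K f)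
    {x y : E} {s t a b : ℝ} (hs : 0 < s) (ht : 0 < t) (hx : s⁻¹ • x ∈ K) (hy : t⁻¹ • y ∈ K)
    (ha : 0 ≤ a) (hb : 0 ≤ b) (hab : a + b = 1) :
    perspective f (a • x + b • y) (a * s + b * t) ≤
      a * perspective f x s + b * perspective f y t := by
  have hm : 0 < a * s + b * t := by
    nlinarith [mul_le_mul_of_nonneg_left (min_le_left s t) ha,
      mul_le_mul_of_nonneg_left (min_le_right s t) hb, lt_min hs ht]
  have hcombo : (a * s + b * t)⁻¹ • (a • x + b • y) =
      (a * s / (a * s + b * t)) • (s⁻¹ • x) + (b * t / (a * s + b * t)) • (t⁻¹ • y) := by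
    simp only [smul_add, smul_smul]
    congr 2 <;> field_simp
  have hweights : a * s / (a * s + b * t) + b * t / (a * s + b * t) = 1 := by
    field_simp
  have hconv := hf.2 hx hy (by positivity) (by positivity) hweights
  rw [← hcombo, smul_eq_mul, smul_eq_mul] at hconv
  unfold perspective
  calc (a * s + b * t) * f ((a * s + b * t)⁻¹ • (a • x + b • y))
      ≤ (a * s + b * t) * (a * s / (a * s + b * t) * f (s⁻¹ • x) +
          b * t / (a * s + b * t) * f (t⁻¹ • y)) := mul_le_mul_of_nonneg_left hconv hm.le
    _ = a * (s * f (s⁻¹ • x)) + b * (t * f (t⁻¹ • y)) := by field_simp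

end Perspective

section Gauge

variable {E : Type*} [AddCommGroup E] [Module ℝ E] {K : Set E}

theorem convexOn_gauge (hKconv : Convex ℝ K) (hKabs : Absorbent ℝ K) :
    ConvexOn ℝ univ (gauge K) := by
  refine ⟨convex_univ, fun x _ y _ a b ha hb _ => ?_⟩
  calc gauge K (a • x + b • y) ≤ gauge K (a • x) + gauge K (b • y) :=
        gauge_add_le hKconv hKabs _ _
    _ = a • gauge K x + b • gauge K y := by
        rw [gauge_smul_of_nonneg ha, gauge_smul_of_nonneg hb]

theorem convexOn_max_one_gauge_div (hKconv : Convex ℝ K) (hKabs : Absorbent ℝ K) {c : ℝ}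
    (hc : 0 ≤ c) : ConvexOn ℝ univ (fun x => max 1 (gauge K x / c)) := by
  have := (convexOn_const 1 convex_univ).sup ((convexOn_gauge hKconv hKabs).smul (inv_nonneg.2 hc))
  exact this.congr fun x _ => by simp [div_eq_inv_mul]

end Gauge

section Extension

variable {E : Type*} [AddCommGroup E] [Module ℝ E] [TopologicalSpace E]
  [IsTopologicalAddGroup E] [ContinuousSMul ℝ E] {K : Set E}

theorem inv_smul_mem_of_gauge_le (hKcl : IsClosed K) (hKconv : Convex ℝ K) (hK0 : K ∈ nhds 0)
    {x : E} {t : ℝ} (ht : 0 < t) (hx : gauge K x ≤ t) : t⁻¹ • x ∈ K := by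
  rw [← hKcl.closure_eq, ← gauge_le_one_iff_mem_closure hKconv hK0,
    gauge_smul_of_nonneg (inv_nonneg.2 ht.le), smul_eq_mul, inv_mul_le_iff₀ ht, mul_one]
  exact hx

theorem perspective_le_perspective_add (hKcl : IsClosed K) (hKconv : Convex ℝ K)
    (hK0 : K ∈ nhds 0) {f : E → ℝ} (hf : ConvexOn ℝ K f) (hf0 : ∀ x ∈ K, 0 ≤ f x)
    (hf1 : ∀ x ∈ K, f x ≤ 1) {ε : ℝ} (hε0 : 0 < ε) (hε1 : ε < 1) {z : E} {s t : ℝ} (hs : 0 < s)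
    (hz : gauge K z ≤ (1 - ε) * s) (hst : s ≤ t) :
    perspective f z s ≤ perspective f z t + (t - s) / ε := by
  set c := (1 - ε) * s with hc_def
  have hc : 0 < c := mul_pos (by linarith) hs
  have hct : c < t := by nlinarith
  set θ := ε * s / (t - c)
  have hθ0 : 0 ≤ θ := div_nonneg (by positivity) (by linarith)
  have hθ1 : θ ≤ 1 := by rw [div_le_one (by linarith)]; nlinarith
  have hθ_mul : θ * (t - c) = ε * s := div_mul_cancel₀ _ (by linarith)
  have hs_eq : θ * t + (1 - θ) * c = s := by linear_combination hθ_mul + hc_def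
  have hmem_t : t⁻¹ • z ∈ K := inv_smul_mem_of_gauge_le hKcl hKconv hK0 (by linarith) (by nlinarith)
  have hmem_c : c⁻¹ • z ∈ K := inv_smul_mem_of_gauge_le hKcl hKconv hK0 hc hz
  have hcombo := hf.perspective_combo_le (by linarith) hc hmem_t hmem_c hθ0 (by linarith)
    (add_sub_cancel θ 1)
  rw [Convex.combo_self (add_sub_cancel θ 1), hs_eq] at hcombo
  have hpers_t : 0 ≤ perspective f z t := mul_nonneg (by linarith) (hf0 _ hmem_t)
  have hpers_c : perspective f z c ≤ c := mul_le_of_le_one_right hc.le (hf1 _ hmem_c)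
  have hloss : (1 - θ) * c ≤ (t - s) / ε := by
    have hroom : (1 + ε) * c ≤ t := by nlinarith [mul_nonneg (mul_nonneg hε0.le hε0.le) hs.le]
    rw [le_div_iff₀ hε0]
    nlinarith [mul_le_mul_of_nonneg_left hroom (by linarith : 0 ≤ 1 - θ)]
  nlinarith [mul_nonneg (by linarith : 0 ≤ 1 - θ) hpers_t,
    mul_le_mul_of_nonneg_left hpers_c (by linarith : 0 ≤ 1 - θ)]

theorem convexOn_perspective_add_div (hKcl : IsClosed K) (hKconv : Convex ℝ K)
    (hK0 : K ∈ nhds 0) {f : E → ℝ} (hf : ConvexOn ℝ K f) (hf0 : ∀ x ∈ K, 0 ≤ f x)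
    (hf1 : ∀ x ∈ K, f x ≤ 1) {ε : ℝ} (hε0 : 0 < ε) (hε1 : ε < 1) {p : E → ℝ} (hp : ConvexOn ℝ univ p) (hp0 : ∀ x, 0 < p x)
    (hpK : ∀ x, gauge K x ≤ (1 - ε) * p x) :
    ConvexOn ℝ univ (fun x => perspective f x (p x) + p x / ε) := by
  refine ⟨convex_univ, fun x _ y _ a b ha hb hab => ?_⟩
  set z := a • x + b • y
  set m := a * p x + b * p y
  have hp_le : p z ≤ m := hp.2 trivial trivial ha hb hab
  have hmono := perspective_le_perspective_add hKcl hKconv hK0 hf hf0 hf1 hε0 hε1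
    (hp0 z) (hpK z) hp_le
  have hjoint : perspective f z m ≤ a * perspective f x (p x) + b * perspective f y (p y) :=
    hf.perspective_combo_le (hp0 x) (hp0 y)
      (inv_smul_mem_of_gauge_le hKcl hKconv hK0 (hp0 x) ((hpK x).trans (by nlinarith [hp0 x])))
      (inv_smul_mem_of_gauge_le hKcl hKconv hK0 (hp0 y) ((hpK y).trans (by nlinarith [hp0 y])))
      ha hb hab
  simp only [smul_eq_mul]
  calc perspective f z (p z) + p z / ε
      ≤ perspective f z m + (m - p z) / ε + p z / ε := by linarith
    _ = perspective f z m + m / ε := by ring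
    _ ≤ a * perspective f x (p x) + b * perspective f y (p y) + m / ε := by linarith
    _ = a * (perspective f x (p x) + p x / ε) + b * (perspective f y (p y) + p y / ε) := by ring

end Extension

theorem statement2_general {d : ℕ} (K : Set (EuclideanSpace ℝ (Fin d)))
    (hKcomp : IsCompact K) (hKconv : Convex ℝ K)
    (hKball : closedBall (0 : EuclideanSpace ℝ (Fin d)) 1 ⊆ K)
    (ε : ℝ) (hε : ε ∈ Set.Ioo (0 : ℝ) (1/2))
    (ℓ : EuclideanSpace ℝ (Fin d) → ℝ)
    (hℓconv : ConvexOn ℝ K ℓ) (hℓ01 : ∀ x ∈ K, ℓ x ∈ Set.Icc (0 : ℝ) 1) :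
    ConvexOn ℝ Set.univ (fun x : EuclideanSpace ℝ (Fin d) =>
      (max 1 (gauge K x / (1 - ε))) * ℓ ((max 1 (gauge K x / (1 - ε)))⁻¹ • x)
        + (max 1 (gauge K x / (1 - ε)) - 1) / ε) := by
  obtain ⟨hε0, hε2⟩ := hε
  have hK0 : K ∈ nhds (0 : EuclideanSpace ℝ (Fin d)) :=
    Filter.mem_of_superset (closedBall_mem_nhds 0 one_pos) hKball
  have hpK (x : EuclideanSpace ℝ (Fin d)) : gauge K x ≤ (1 - ε) * max 1 (gauge K x / (1 - ε)) := by
    rw [mul_comm, ← div_le_iff₀ (by linarith)]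
    exact le_max_right _ _
  have hext := convexOn_perspective_add_div hKcomp.isClosed hKconv hK0 hℓconv
    (fun x hx => (hℓ01 x hx).1) (fun x hx => (hℓ01 x hx).2) hε0 (by linarith)
    (convexOn_max_one_gauge_div hKconv (absorbent_nhds_zero hK0) (by linarith))
    (fun x => one_pos.trans_le (le_max_left _ _)) hpK
  refine (hext.add_const (-ε⁻¹)).congr fun x _ => ?_
  simp only [Pi.add_apply, perspective]
  ring

/-- The bandit extension `e(x) = π̄(x)·ℓ(x/π̄(x)) + (π̄(x)-1)/ε`, with
`π̄(x) = max 1 (gauge K x / (1-ε))`, is convex on all of `ℝ^d`. -/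
theorem statement2 {d : ℕ} (K : Set (EuclideanSpace ℝ (Fin d)))
    (hKcomp : IsCompact K) (hKconv : Convex ℝ K)
    (hKint : (interior K).Nonempty) (hKball : closedBall (0 : EuclideanSpace ℝ (Fin d)) 1 ⊆ K)
    (ε : ℝ) (hε : ε ∈ Set.Ioo (0 : ℝ) (1/2))
    (ℓ : EuclideanSpace ℝ (Fin d) → ℝ)
    (hℓconv : ConvexOn ℝ K ℓ) (hℓ01 : ∀ x ∈ K, ℓ x ∈ Set.Icc (0 : ℝ) 1) :
    ConvexOn ℝ Set.univ (fun x : EuclideanSpace ℝ (Fin d) =>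
      (max 1 (gauge K x / (1 - ε))) * ℓ ((max 1 (gauge K x / (1 - ε)))⁻¹ • x)
        + (max 1 (gauge K x / (1 - ε)) - 1) / ε) :=
  statement2_general K hKcomp hKconv hKball ε hε ℓ hℓconv hℓ01
end

section
/- Let K be a convex body containing the unit ball, ε ∈ (0,1/2), and ℓ : K → [0,1] convex. For every x ∉ (1-ε)K, the directional derivative of the extension e in the direction x is nonnegative; consequently for x on the boundary of (1-ε)K the function t ↦ e(t·x) is non-decreasing for t ≥ 1, and every minimiser of e lies in (1-ε)K. -/
open Metric Set Pointwise

/-- Outside `(1-ε)K` the extension `e` is non-decreasing in the radial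
direction (the directional derivative of `e` at `x` in the direction `x` is
nonnegative); consequently for `x` on the boundary of `(1-ε)K` the map
`t ↦ e (t • x)` is non-decreasing on `t ≥ 1`, and every minimiser of `e`
lies in `(1-ε)K`. -/
theorem statement4 {d : ℕ} (K : Set (EuclideanSpace ℝ (Fin d)))
    (hKcomp : IsCompact K) (hKconv : Convex ℝ K)
    (hKint : (interior K).Nonempty) (hKball : closedBall (0 : EuclideanSpace ℝ (Fin d)) 1 ⊆ K)
    (ε : ℝ) (hε : ε ∈ Set.Ioo (0 : ℝ) (1/2))
    (ℓ : EuclideanSpace ℝ (Fin d) → ℝ)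
    (hℓconv : ConvexOn ℝ K ℓ) (hℓ01 : ∀ x ∈ K, ℓ x ∈ Set.Icc (0 : ℝ) 1)
    (e : EuclideanSpace ℝ (Fin d) → ℝ)
    (he : ∀ x, e x = (max 1 (gauge K x / (1 - ε))) * ℓ ((max 1 (gauge K x / (1 - ε)))⁻¹ • x)
        + (max 1 (gauge K x / (1 - ε)) - 1) / ε) :
    (∀ x ∉ (1 - ε) • K, ∀ t : ℝ, 0 ≤ t → e x ≤ e (x + t • x)) ∧
    (∀ x ∈ frontier ((1 - ε) • K), ∀ t₁ t₂ : ℝ, 1 ≤ t₁ → t₁ ≤ t₂ →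
      e (t₁ • x) ≤ e (t₂ • x)) ∧
    (∀ x : EuclideanSpace ℝ (Fin d), (∀ y, e x ≤ e y) → x ∈ (1 - ε) • K) := by
  obtain ⟨hε0, hε2⟩ := hε
  have hεlt : ε < 1 := by linarith
  have h1ε : (0:ℝ) < 1 - ε := by linarith
  have hKnhds : K ∈ nhds (0 : EuclideanSpace ℝ (Fin d)) :=
    Filter.mem_of_superset (Metric.closedBall_mem_nhds 0 one_pos) hKball
  have hKclosed : IsClosed K := hKcomp.isClosed
  have hK'conv : Convex ℝ ((1 - ε) • K) := hKconv.smul _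
  have hK'closed : IsClosed ((1 - ε) • K) := (hKcomp.smul _).isClosed
  have hK'nhds : (1 - ε) • K ∈ nhds (0 : EuclideanSpace ℝ (Fin d)) := by
    refine Filter.mem_of_superset (Metric.closedBall_mem_nhds 0 h1ε) ?_
    intro y hy
    refine ⟨(1 - ε)⁻¹ • y, hKball ?_, smul_inv_smul₀ h1ε.ne' y⟩
    rw [mem_closedBall_zero_iff] at hy ⊢
    rw [norm_smul, norm_inv, Real.norm_of_nonneg h1ε.le]
    rw [inv_mul_le_iff₀ h1ε]
    linarith
  -- membership in K via gauge
  have hmemK : ∀ y, gauge K y ≤ 1 ↔ y ∈ K := by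
    intro y
    rw [gauge_le_one_iff_mem_closure hKconv hKnhds, hKclosed.closure_eq]
  -- membership in (1-ε)•K via gauge
  have hgK' : ∀ y, gauge ((1 - ε) • K) y = gauge K y / (1 - ε) := by
    intro y
    rw [gauge_smul_left_of_nonneg h1ε.le]
    simp [div_eq_inv_mul]
  have hmemK' : ∀ y, gauge K y ≤ 1 - ε ↔ y ∈ (1 - ε) • K := by
    intro y
    rw [← hK'closed.closure_eq, ← gauge_le_one_iff_mem_closure hK'conv hK'nhds, hgK',
      div_le_one h1ε]
  have hgnonneg : ∀ y, 0 ≤ gauge K y := fun y => gauge_nonneg y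
  -- core computation: for gauge K x > 1 - ε and s ≥ 1,
  -- e (s • x) = s * (g/(1-ε)) * ℓ z + (s * (g/(1-ε)) - 1)/ε with z fixed
  have hcore : ∀ (x : EuclideanSpace ℝ (Fin d)), 1 - ε < gauge K x → ∀ s : ℝ, 1 ≤ s →
      e (s • x) = (s * (gauge K x / (1 - ε))) * ℓ (((1 - ε) / gauge K x) • x)
        + (s * (gauge K x / (1 - ε)) - 1) / ε := by
    intro x hgx s hs
    set g := gauge K x with hg
    have hgpos : 0 < g := lt_trans h1ε hgx
    have hspos : 0 < s := lt_of_lt_of_le one_pos hs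
    have hgs : gauge K (s • x) = s * g := by
      rw [gauge_smul_of_nonneg hspos.le, smul_eq_mul]
    have hr1 : 1 ≤ s * (g / (1 - ε)) := by
      have : 1 < g / (1 - ε) := (one_lt_div h1ε).2 hgx
      nlinarith
    have hmax : max 1 (gauge K (s • x) / (1 - ε)) = s * (g / (1 - ε)) := by
      rw [hgs, mul_div_assoc]
      exact max_eq_right hr1
    have hz : (s * (g / (1 - ε)))⁻¹ • (s • x) = ((1 - ε) / g) • x := by
      rw [smul_smul]
      congr 1
      field_simp
    rw [he, hmax, hz]
  have hzK : ∀ (x : EuclideanSpace ℝ (Fin d)), 1 - ε < gauge K x →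
      ((1 - ε) / gauge K x) • x ∈ K := by
    intro x hgx
    have hgpos : 0 < gauge K x := lt_trans h1ε hgx
    rw [← hmemK, gauge_smul_of_nonneg (by positivity : (0:ℝ) ≤ (1 - ε) / gauge K x),
      smul_eq_mul, div_mul_cancel₀ _ hgpos.ne']
    linarith
  refine ⟨?_, ?_, ?_⟩
  · -- part 1
    intro x hx t ht
    have hgx : 1 - ε < gauge K x := by
      by_contra h
      exact hx ((hmemK' x).1 (not_lt.1 h))
    have hzmem := hzK x hgx
    have hℓz : 0 ≤ ℓ (((1 - ε) / gauge K x) • x) := (hℓ01 _ hzmem).1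
    have hgpos : 0 < gauge K x := lt_trans h1ε hgx
    have h1 := hcore x hgx 1 le_rfl
    have h2 := hcore x hgx (1 + t) (by linarith)
    have hxx : x + t • x = (1 + t) • x := by
      rw [add_smul, one_smul]
    rw [hxx, h2]
    rw [show (1:ℝ) • x = x from one_smul ℝ x] at h1
    rw [h1]
    have hrpos : 0 < gauge K x / (1 - ε) := by positivity
    apply add_le_add
    · nlinarith [mul_nonneg hrpos.le hℓz]
    · gcongr
      nlinarith
  · -- part 2
    intro x hx t₁ t₂ ht₁ ht₁₂
    have hgx : gauge K x = 1 - ε := by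
      have := (gauge_eq_one_iff_mem_frontier hK'conv hK'nhds).2 hx
      rw [hgK', div_eq_one_iff_eq h1ε.ne'] at this
      exact this
    have hxK : x ∈ K := (hmemK x).1 (by rw [hgx]; linarith)
    have hℓx : 0 ≤ ℓ x := (hℓ01 _ hxK).1
    have hcomp : ∀ t : ℝ, 1 ≤ t → e (t • x) = t * ℓ x + (t - 1) / ε := by
      intro t ht
      have htpos : 0 < t := lt_of_lt_of_le one_pos ht
      have hgt : gauge K (t • x) = t * (1 - ε) := by
        rw [gauge_smul_of_nonneg htpos.le, smul_eq_mul, hgx]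
      have hmax : max 1 (gauge K (t • x) / (1 - ε)) = t := by
        rw [hgt, mul_div_cancel_right₀ _ h1ε.ne']
        exact max_eq_right ht
      rw [he, hmax, inv_smul_smul₀ htpos.ne']
    rw [hcomp t₁ ht₁, hcomp t₂ (le_trans ht₁ ht₁₂)]
    apply add_le_add
    · nlinarith
    · gcongr <;> linarith
  · -- part 3
    intro x hmin
    by_contra hx
    have hgx : 1 - ε < gauge K x := by
      by_contra h
      exact hx ((hmemK' x).1 (not_lt.1 h))
    have hgpos : 0 < gauge K x := lt_trans h1ε hgx
    set z := ((1 - ε) / gauge K x) • x with hzdef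
    have hzmem := hzK x hgx
    have hℓz : 0 ≤ ℓ z := (hℓ01 _ hzmem).1
    have hgz : gauge K z = 1 - ε := by
      rw [hzdef, gauge_smul_of_nonneg (by positivity : (0:ℝ) ≤ (1 - ε) / gauge K x),
        smul_eq_mul, div_mul_cancel₀ _ hgpos.ne']
    have hez : e z = ℓ z := by
      rw [he, hgz, div_self h1ε.ne']
      simp
    have hex : e x = (gauge K x / (1 - ε)) * ℓ z + (gauge K x / (1 - ε) - 1) / ε := by
      have := hcore x hgx 1 le_rfl
      rw [one_smul, one_mul] at this
      exact this
    have hr : 1 < gauge K x / (1 - ε) := (one_lt_div h1ε).2 hgx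
    have := hmin z
    rw [hez, hex] at this
    have hpos : 0 < (gauge K x / (1 - ε) - 1) / ε := by
      apply div_pos (by linarith) hε0
    nlinarith
end

section
/- Let A, B, M be positive definite d×d real matrices with A ⪯ B (i.e. B - A positive semidefinite). Then the operator norm satisfies ‖A^{1/2} M A^{1/2}‖ ≤ ‖B^{1/2} M B^{1/2}‖. -/
open scoped Matrix.Norms.L2Operator

open scoped ComplexOrder in
/-- The square root of a positive semidefinite matrix, as defined in the older Mathlib
(`Matrix.PosSemidef.sqrt`), which has since been removed. -/
noncomputable def Matrix.PosSemidef.sqrt {n : Type*} {𝕜 : Type*} [Fintype n] [DecidableEq n]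
    [RCLike 𝕜] {A : Matrix n n 𝕜} (hA : A.PosSemidef) : Matrix n n 𝕜 :=
  hA.1.eigenvectorUnitary.1 * Matrix.diagonal ((↑) ∘ (√·) ∘ hA.1.eigenvalues) *
    (star hA.1.eigenvectorUnitary : Matrix n n 𝕜)

/-!
With `C = M^{1/2} X^{1/2}`, the C⋆-identity `‖C⋆C‖ = ‖C‖² = ‖CC⋆‖` gives
`‖X^{1/2} M X^{1/2}‖ = ‖M^{1/2} X M^{1/2}‖`. Conjugating `A ⪯ B` by `M^{1/2}` yields
`0 ⪯ M^{1/2} A M^{1/2} ⪯ M^{1/2} B M^{1/2}`, and the operator norm is monotone on positive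
semidefinite matrices: `‖P‖ = ‖P^{1/2}‖²` and `‖P^{1/2} v‖² = ⟪v, P v⟫`.
-/

open scoped MatrixOrder ComplexOrder

section CStarRing

variable {A : Type*} [PartialOrder A] [NonUnitalNormedRing A] [StarRing A] [CStarRing A]
  [Module ℝ A] [SMulCommClass ℝ A A] [IsScalarTower ℝ A A] [StarOrderedRing A]
  [NonUnitalContinuousFunctionalCalculus ℝ A IsSelfAdjoint] [NonnegSpectrumClass ℝ A]

open CFC in
theorem CStarRing.norm_sqrt_mul_mul_sqrt_comm {a b : A} (ha : 0 ≤ a) (hb : 0 ≤ b) :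
    ‖sqrt a * b * sqrt a‖ = ‖sqrt b * a * sqrt b‖ := by
  set c := sqrt b * sqrt a
  have hc : star c * c = sqrt a * b * sqrt a := by
    rw [star_mul, (sqrt_nonneg a).star_eq, (sqrt_nonneg b).star_eq, ← mul_assoc,
      mul_assoc (sqrt a), sqrt_mul_sqrt_self b]
  have hc' : c * star c = sqrt b * a * sqrt b := by
    rw [star_mul, (sqrt_nonneg a).star_eq, (sqrt_nonneg b).star_eq, ← mul_assoc,
      mul_assoc (sqrt b), sqrt_mul_sqrt_self a]
  rw [← hc, ← hc', CStarRing.norm_star_mul_self, CStarRing.norm_self_mul_star]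

end CStarRing

namespace Matrix

variable {m n 𝕜 : Type*} [Fintype m] [Fintype n] [RCLike 𝕜]

theorem PosSemidef.sqrt_eq_cfcSqrt [DecidableEq n] {A : Matrix n n 𝕜} (hA : A.PosSemidef) :
    hA.sqrt = CFC.sqrt A := by
  rw [CFC.sqrt_eq_cfc, cfc_nnreal_eq_real _ A, hA.1.cfc_eq]
  simp only [IsHermitian.cfc, PosSemidef.sqrt, Unitary.conjStarAlgAut_apply]
  congr 3
  funext i
  simp [hA.eigenvalues_nonneg i]

theorem norm_mulVec_sq (X : Matrix m n 𝕜) (v : EuclideanSpace 𝕜 n) :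
    ‖(EuclideanSpace.equiv m 𝕜).symm (X *ᵥ v)‖ ^ 2 = RCLike.re (star ⇑v ⬝ᵥ (Xᴴ * X) *ᵥ v) := by
  rw [← mulVec_mulVec, dotProduct_mulVec, ← star_mulVec, norm_sq_eq_re_inner (𝕜 := 𝕜),
    EuclideanSpace.inner_eq_star_dotProduct, dotProduct_comm]
  rfl

theorem l2_opNorm_le_of_conjTranspose_mul_self_le [DecidableEq n] {X Y : Matrix m n 𝕜}
    (h : Xᴴ * X ≤ Yᴴ * Y) : ‖X‖ ≤ ‖Y‖ := by
  rw [l2_opNorm_def]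
  refine ContinuousLinearMap.opNorm_le_bound _ (norm_nonneg _) fun v => ?_
  calc ‖(EuclideanSpace.equiv m 𝕜).symm (X *ᵥ v)‖
      ≤ ‖(EuclideanSpace.equiv m 𝕜).symm (Y *ᵥ v)‖ := by
        refine (sq_le_sq₀ (norm_nonneg _) (norm_nonneg _)).mp ?_
        have hv := (RCLike.nonneg_iff.mp ((le_iff.mp h).dotProduct_mulVec_nonneg v)).1
        rw [norm_mulVec_sq, norm_mulVec_sq]
        simpa [sub_mulVec, dotProduct_sub] using hv
    _ ≤ ‖Y‖ * ‖v‖ := Y.l2_opNorm_mulVec v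

theorem l2_opNorm_le_of_nonneg_of_le [DecidableEq n] {P Q : Matrix n n 𝕜} (hP : 0 ≤ P)
    (hPQ : P ≤ Q) : ‖P‖ ≤ ‖Q‖ := by
  have hQ : 0 ≤ Q := hP.trans hPQ
  have hsqrt : ∀ R : Matrix n n 𝕜, 0 ≤ R → (CFC.sqrt R)ᴴ * CFC.sqrt R = R := fun R hR => by
    rw [← star_eq_conjTranspose, (CFC.sqrt_nonneg R).star_eq, CFC.sqrt_mul_sqrt_self R hR]
  have hle : ‖CFC.sqrt P‖ ≤ ‖CFC.sqrt Q‖ :=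
    l2_opNorm_le_of_conjTranspose_mul_self_le (by rwa [hsqrt P hP, hsqrt Q hQ])
  rw [← hsqrt P hP, ← hsqrt Q hQ, l2_opNorm_conjTranspose_mul_self,
    l2_opNorm_conjTranspose_mul_self]
  exact mul_self_le_mul_self (norm_nonneg _) hle

end Matrix

open Matrix CFC in
/-- If `A ⪯ B` (i.e. `B - A` PSD) for positive definite `A, B` and `M` is
positive definite, then `‖A^{1/2} M A^{1/2}‖ ≤ ‖B^{1/2} M B^{1/2}‖` in the
L2 operator norm. -/
theorem statement5 {d : ℕ} (A B M : Matrix (Fin d) (Fin d) ℝ)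
    (hA : A.PosDef) (hB : B.PosDef) (hM : M.PosDef)
    (hAB : (B - A).PosSemidef) :
    ‖hA.posSemidef.sqrt * M * hA.posSemidef.sqrt‖ ≤
      ‖hB.posSemidef.sqrt * M * hB.posSemidef.sqrt‖ := by
  rw [hA.posSemidef.sqrt_eq_cfcSqrt, hB.posSemidef.sqrt_eq_cfcSqrt,
    CStarRing.norm_sqrt_mul_mul_sqrt_comm hA.posSemidef.nonneg hM.posSemidef.nonneg,
    CStarRing.norm_sqrt_mul_mul_sqrt_comm hB.posSemidef.nonneg hM.posSemidef.nonneg]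
  exact l2_opNorm_le_of_nonneg_of_le
    (conjugate_nonneg_of_nonneg hA.posSemidef.nonneg (sqrt_nonneg M))
    (conjugate_le_conjugate_of_nonneg (le_iff.mpr hAB) (sqrt_nonneg M))
end

section
/- Let (Φ_t)_{t=0}^n be defined by Φ_t(x) = ‖x‖²/(2σ²) + η·Σ_{u≤t} q̂_u(x) for quadratic functions q̂_u, assume each Φ_t is convex, let (K_t)_{t=0}^n be a decreasing sequence of subsets of a convex set K, and let x_t = argmin_{x ∈ K_{t-1}} Φ_{t-1}(x). Then for any x ∈ K_n: η·Σ_{t=1}^n (q̂_t(x_t) − q̂_t(x)) ≤ ‖x‖²/(2σ²) + 2η²·Σ_{t=1}^n ‖q̂_t'(x_t)‖²_{(Φ_t'')^{-1}}, where ‖g‖²_A = gᵀAg. -/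
open Matrix Finset Filter Topology

/-!
Each potential `Φ t` is a quadratic with Hessian `H t`, and `Φ (t + 1) = Φ t + η q t`.
First-order optimality of `x t` on the convex set `K t` gives
`Φ t z - Φ t (x t) ≥ ½‖z - x t‖²_{H t}` there; adding `η q t` and completing the square yields,
for `z ∈ K (t + 1)`, `Φ (t + 1) (x t) - Φ (t + 1) z ≤ ½ η² ‖∇q t (x t)‖²_{H (t + 1)⁻¹}`.
The regret telescopes ("be the leader") into the sum of these one-step differences, taken at
`z = x (t + 1)` with the comparator in place of `x n`, plus `Φ 0 (comparator) - Φ 0 (x 0)`,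
which is at most `‖comparator‖² / (2σ²)`.
-/

theorem Matrix.IsSymm.dotProduct_mulVec_comm {ι α : Type*} [Fintype ι] [CommSemiring α]
    {M : Matrix ι ι α} (hM : M.IsSymm) (a b : ι → α) : a ⬝ᵥ M *ᵥ b = b ⬝ᵥ M *ᵥ a := by
  rw [dotProduct_mulVec, ← mulVec_transpose, hM.eq, dotProduct_comm]

theorem nonneg_of_forall_mul_add_sq_mul_nonneg {a b : ℝ}
    (h : ∀ l ∈ Set.Ioc (0 : ℝ) 1, 0 ≤ l * a + l ^ 2 * b) : 0 ≤ a := by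
  have hlim : Tendsto (fun l : ℝ => a + l * b) (𝓝[>] 0) (𝓝 a) :=
    (Continuous.tendsto' (by fun_prop) 0 a (by simp)).mono_left nhdsWithin_le_nhds
  refine ge_of_tendsto hlim ?_
  filter_upwards [Ioc_mem_nhdsGT one_pos] with l hl
  have := h l hl
  have hl0 : 0 < l := hl.1
  nlinarith

variable {ι : Type*} [Fintype ι]

noncomputable def quadFn (c : ℝ) (b : ι → ℝ) (M : Matrix ι ι ℝ) (x : ι → ℝ) : ℝ :=
  c + b ⬝ᵥ x + 1 / 2 * (x ⬝ᵥ M *ᵥ x)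

theorem quadFn_add {M : Matrix ι ι ℝ} (hM : M.IsSymm) (c : ℝ) (b y w : ι → ℝ) :
    quadFn c b M (y + w) = quadFn c b M y + (b + M *ᵥ y) ⬝ᵥ w + 1 / 2 * (w ⬝ᵥ M *ᵥ w) := by
  simp only [quadFn, mulVec_add, dotProduct_add, add_dotProduct, dotProduct_comm (M *ᵥ y) w,
    hM.dotProduct_mulVec_comm w y]
  ring

theorem quadFn_add_quadFn (c c' : ℝ) (b b' : ι → ℝ) (M M' : Matrix ι ι ℝ) (x : ι → ℝ) :
    quadFn c b M x + quadFn c' b' M' x = quadFn (c + c') (b + b') (M + M') x := by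
  simp only [quadFn, add_mulVec, dotProduct_add, add_dotProduct]
  ring

theorem mul_quadFn (a c : ℝ) (b : ι → ℝ) (M : Matrix ι ι ℝ) (x : ι → ℝ) :
    a * quadFn c b M x = quadFn (a * c) (a • b) (a • M) x := by
  simp only [quadFn, smul_mulVec, dotProduct_smul, smul_dotProduct, smul_eq_mul]
  ring

theorem sum_quadFn {κ : Type*} (s : Finset κ) (c : κ → ℝ) (b : κ → ι → ℝ)
    (M : κ → Matrix ι ι ℝ) (x : ι → ℝ) :
    ∑ u ∈ s, quadFn (c u) (b u) (M u) x =
      quadFn (∑ u ∈ s, c u) (∑ u ∈ s, b u) (∑ u ∈ s, M u) x := by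
  simp only [quadFn, sum_add_distrib, sum_dotProduct, sum_mulVec, dotProduct_sum, mul_sum]

theorem dotProduct_self_div_eq_quadFn [DecidableEq ι] (σ : ℝ) (x : ι → ℝ) :
    x ⬝ᵥ x / (2 * σ ^ 2) = quadFn 0 0 ((σ ^ 2)⁻¹ • 1) x := by
  simp only [quadFn, smul_mulVec, one_mulVec, dotProduct_smul, zero_dotProduct, smul_eq_mul]
  ring

theorem neg_half_dotProduct_inv_mulVec_le [DecidableEq ι] {H : Matrix ι ι ℝ} (hH : H.PosDef)
    (v w : ι → ℝ) : -(1 / 2 * (v ⬝ᵥ H⁻¹ *ᵥ v)) ≤ v ⬝ᵥ w + 1 / 2 * (w ⬝ᵥ H *ᵥ w) := by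
  have hHH : H *ᵥ H⁻¹ *ᵥ v = v := by
    rw [mulVec_mulVec, mul_nonsing_inv _ (isUnit_iff_isUnit_det _ |>.1 hH.isUnit), one_mulVec]
  have hsq : 0 ≤ quadFn 0 0 H (H⁻¹ *ᵥ v + w) := by
    have := hH.posSemidef.dotProduct_mulVec_nonneg (H⁻¹ *ᵥ v + w)
    simp only [star_trivial] at this
    simp only [quadFn, zero_dotProduct]
    linarith
  rw [quadFn_add (isHermitian_iff_isSymm.1 hH.isHermitian), zero_add, hHH] at hsq
  simp only [quadFn, zero_dotProduct, hHH, dotProduct_comm (H⁻¹ *ᵥ v) v] at hsq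
  linarith

theorem IsMinOn.half_dotProduct_mulVec_le_sub {f : (ι → ℝ) → ℝ} {K : Set (ι → ℝ)}
    {y z G : ι → ℝ} {M : Matrix ι ι ℝ}
    (hf : ∀ w, f (y + w) = f y + G ⬝ᵥ w + 1 / 2 * (w ⬝ᵥ M *ᵥ w))
    (hK : Convex ℝ K) (hy : y ∈ K) (hmin : IsMinOn f K y) (hz : z ∈ K) :
    1 / 2 * ((z - y) ⬝ᵥ M *ᵥ (z - y)) ≤ f z - f y := by
  have hG : 0 ≤ G ⬝ᵥ (z - y) := by
    refine nonneg_of_forall_mul_add_sq_mul_nonneg (b := 1 / 2 * ((z - y) ⬝ᵥ M *ᵥ (z - y))) ?_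
    intro l hl
    have hmem := hK.add_smul_sub_mem hy hz (Set.Ioc_subset_Icc_self hl)
    have := isMinOn_iff.1 hmin _ hmem
    rw [hf, dotProduct_smul, mulVec_smul, dotProduct_smul, smul_dotProduct] at this
    simp only [smul_eq_mul] at this
    linarith
  have := hf (z - y)
  rw [add_sub_cancel] at this
  linarith

theorem IsMinOn.quadFn_add_mul_quadFn_sub_le [DecidableEq ι] {K : Set (ι → ℝ)} {y z : ι → ℝ}
    {M A : Matrix ι ι ℝ} {η c c' : ℝ} {b b' : ι → ℝ} (hmin : IsMinOn (quadFn c b M) K y)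
    (hK : Convex ℝ K) (hy : y ∈ K) (hz : z ∈ K) (hM : M.IsSymm) (hA : A.IsSymm)
    (hMA : (M + η • A).PosDef) :
    quadFn c b M y + η * quadFn c' b' A y - (quadFn c b M z + η * quadFn c' b' A z) ≤
      1 / 2 * η ^ 2 * ((b' + A *ᵥ y) ⬝ᵥ (M + η • A)⁻¹ *ᵥ (b' + A *ᵥ y)) := by
  have hgrowth := hmin.half_dotProduct_mulVec_le_sub (quadFn_add hM c b y) hK hy hz
  have hloss := quadFn_add hA c' b' y (z - y)
  have hsq := neg_half_dotProduct_inv_mulVec_le hMA (η • (b' + A *ᵥ y)) (z - y)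
  rw [add_sub_cancel] at hloss
  simp only [smul_dotProduct, mulVec_smul, dotProduct_smul, add_mulVec, smul_mulVec,
    dotProduct_add, smul_eq_mul] at hsq
  rw [hloss]
  linarith

theorem mul_sum_sub_eq_sum_sub_add {E : Type*} (Φ ℓ : ℕ → E → ℝ) (η : ℝ)
    (hΦ : ∀ t y, Φ (t + 1) y = Φ t y + η * ℓ t y) (z : ℕ → E) (n : ℕ) :
    η * ∑ t ∈ range n, (ℓ t (z t) - ℓ t (z n)) =
      ∑ t ∈ range n, (Φ (t + 1) (z t) - Φ (t + 1) (z (t + 1))) + Φ 0 (z n) - Φ 0 (z 0) := by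
  have hℓ : ∀ t y, η * ℓ t y = Φ (t + 1) y - Φ t y := fun t y => by rw [hΦ]; ring
  have hcomparator := sum_range_sub (fun t => Φ t (z n)) n
  have hiterates := sum_range_sub (fun t => Φ t (z t)) n
  simp only [mul_sum, mul_sub, hℓ, sum_sub_distrib] at hcomparator hiterates ⊢
  linarith

theorem mul_sum_sub_le_of_forall_sub_le {E : Type*} {Φ ℓ : ℕ → E → ℝ} {η : ℝ}
    (hΦ : ∀ t y, Φ (t + 1) y = Φ t y + η * ℓ t y) (hΦ₀ : ∀ y, 0 ≤ Φ 0 y) {K : ℕ → Set E}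
    {n : ℕ} {x : ℕ → E} {xs : E} {δ : ℕ → ℝ} (hx : ∀ t < n, x t ∈ K t) (hxs : xs ∈ K n)
    (hstep : ∀ t < n, ∀ z ∈ K (t + 1), Φ (t + 1) (x t) - Φ (t + 1) z ≤ δ t) :
    η * ∑ t ∈ range n, (ℓ t (x t) - ℓ t xs) ≤ Φ 0 xs + ∑ t ∈ range n, δ t := by
  set z := Function.update x n xs
  have hz : ∀ t ∈ range n, z t = x t := fun t ht => Function.update_of_ne (mem_range.1 ht).ne _ _
  have hzn : z n = xs := Function.update_self n xs x
  have hzK : ∀ t < n, z (t + 1) ∈ K (t + 1) := by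
    intro t ht
    rcases (Nat.succ_le_of_lt ht).lt_or_eq with h | h
    · rw [hz _ (mem_range.2 h)]; exact hx _ h
    · rw [show t + 1 = n from h, hzn]; exact hxs
  have hδ : ∑ t ∈ range n, (Φ (t + 1) (z t) - Φ (t + 1) (z (t + 1))) ≤ ∑ t ∈ range n, δ t :=
    sum_le_sum fun t ht => hz t ht ▸ hstep t (mem_range.1 ht) _ (hzK t (mem_range.1 ht))
  calc η * ∑ t ∈ range n, (ℓ t (x t) - ℓ t xs)
      = η * ∑ t ∈ range n, (ℓ t (z t) - ℓ t (z n)) := by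
        rw [hzn]; congr 1; exact sum_congr rfl fun t ht => by rw [hz t ht]
    _ = ∑ t ∈ range n, (Φ (t + 1) (z t) - Φ (t + 1) (z (t + 1))) + Φ 0 (z n) - Φ 0 (z 0) :=
        mul_sum_sub_eq_sum_sub_add Φ ℓ η hΦ z n
    _ ≤ Φ 0 xs + ∑ t ∈ range n, δ t := by rw [hzn]; linarith [hΦ₀ (z 0)]

theorem statement10_general {d n : ℕ} (σ η : ℝ)
    (c : ℕ → ℝ) (g : ℕ → Fin d → ℝ) (A : ℕ → Matrix (Fin d) (Fin d) ℝ)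
    (hAsymm : ∀ u, (A u).IsSymm)
    (q : ℕ → (Fin d → ℝ) → ℝ)
    (hq : ∀ u x, q u x = c u + g u ⬝ᵥ x + (1/2) * (x ⬝ᵥ (A u).mulVec x))
    (Φ : ℕ → (Fin d → ℝ) → ℝ)
    (hΦ : ∀ t x, Φ t x = (x ⬝ᵥ x) / (2 * σ ^ 2) + η * ∑ u ∈ range t, q u x)
    (H : ℕ → Matrix (Fin d) (Fin d) ℝ)
    (hH : ∀ t, H t = (σ ^ 2)⁻¹ • (1 : Matrix (Fin d) (Fin d) ℝ) + η • ∑ u ∈ range t, A u)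
    (hHpd : ∀ t ≤ n, (H t).PosDef)
    (K : ℕ → Set (Fin d → ℝ))
    (hKconv : ∀ t, Convex ℝ (K t)) (hKanti : ∀ s t, s ≤ t → K t ⊆ K s)
    (x : ℕ → Fin d → ℝ)
    (hxmem : ∀ t < n, x t ∈ K t)
    (hxmin : ∀ t < n, ∀ y ∈ K t, Φ t (x t) ≤ Φ t y)
    (xs : Fin d → ℝ) (hxs : xs ∈ K n) :
    η * ∑ t ∈ range n, (q t (x t) - q t xs) ≤
      (xs ⬝ᵥ xs) / (2 * σ ^ 2) +
        2 * η ^ 2 * ∑ t ∈ range n,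
          (g t + (A t).mulVec (x t)) ⬝ᵥ ((H (t + 1))⁻¹).mulVec (g t + (A t).mulVec (x t)) := by
  have hq' : ∀ t, q t = quadFn (c t) (g t) (A t) := fun t => funext (hq t)
  have hΦquad : ∀ t, Φ t =
      quadFn (0 + η * ∑ u ∈ range t, c u) (0 + η • ∑ u ∈ range t, g u) (H t) := fun t => by
    ext y
    rw [hΦ, hH, dotProduct_self_div_eq_quadFn, ← quadFn_add_quadFn, ← mul_quadFn, ← sum_quadFn]
    simp only [hq']
  have hΦsucc : ∀ t y, Φ (t + 1) y = Φ t y + η * q t y := fun t y => by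
    rw [hΦ, hΦ, sum_range_succ]; ring
  have hHsucc : ∀ t, H (t + 1) = H t + η • A t := fun t => by
    rw [hH, hH, sum_range_succ, smul_add, add_assoc]
  have hΦ₀ : ∀ y, Φ 0 y = y ⬝ᵥ y / (2 * σ ^ 2) := fun y => by simp [hΦ]
  rw [← hΦ₀, mul_sum _ _ (2 * η ^ 2)]
  refine mul_sum_sub_le_of_forall_sub_le hΦsucc (fun y => ?_) hxmem hxs fun t ht z hz => ?_
  · rw [hΦ₀]; exact div_nonneg (by simpa using dotProduct_self_star_nonneg y) (by positivity)
  have hmin := isMinOn_iff.2 (hxmin t ht)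
  rw [hΦquad t] at hmin
  have hHt₁ : (H t + η • A t).PosDef := hHsucc t ▸ hHpd (t + 1) ht
  have hstab := hmin.quadFn_add_mul_quadFn_sub_le (c' := c t) (b' := g t) (hKconv t) (hxmem t ht)
    (hKanti t (t + 1) t.le_succ hz) (isHermitian_iff_isSymm.1 (hHpd t ht.le).isHermitian)
    (hAsymm t) hHt₁
  have hnorm : 0 ≤ (g t + A t *ᵥ x t) ⬝ᵥ (H t + η • A t)⁻¹ *ᵥ (g t + A t *ᵥ x t) := by
    simpa using hHt₁.inv.posSemidef.dotProduct_mulVec_nonneg (g t + A t *ᵥ x t)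
  rw [hΦsucc, hΦsucc, hq', hΦquad t, hHsucc]
  exact hstab.trans (mul_le_mul_of_nonneg_right (by nlinarith [sq_nonneg η]) hnorm)

/-- Follow-the-regularised-leader with quadratic losses
`q̂ u x = c u + ⟨g u, x⟩ + (1/2) xᵀ (A u) x`.  With
`Φ t x = ‖x‖²/(2σ²) + η Σ_{u<t} q̂ u x` (assumed convex, with positive
definite Hessian `H t = σ⁻² I + η Σ_{u<t} A u`), a decreasing sequence of
convex sets `K t` and iterates `x t` minimising `Φ t` over `K t`, the
quadratic regret against any `x⋆ ∈ K n` is bounded as stated. -/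
theorem statement10 {d n : ℕ} (σ η : ℝ) (hσ : 0 < σ) (hη : 0 < η)
    (c : ℕ → ℝ) (g : ℕ → Fin d → ℝ) (A : ℕ → Matrix (Fin d) (Fin d) ℝ)
    (hAsymm : ∀ u, (A u).IsSymm)
    (q : ℕ → (Fin d → ℝ) → ℝ)
    (hq : ∀ u x, q u x = c u + g u ⬝ᵥ x + (1/2) * (x ⬝ᵥ (A u).mulVec x))
    (Φ : ℕ → (Fin d → ℝ) → ℝ)
    (hΦ : ∀ t x, Φ t x = (x ⬝ᵥ x) / (2 * σ ^ 2) + η * ∑ u ∈ range t, q u x)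
    (H : ℕ → Matrix (Fin d) (Fin d) ℝ)
    (hH : ∀ t, H t = (σ ^ 2)⁻¹ • (1 : Matrix (Fin d) (Fin d) ℝ) + η • ∑ u ∈ range t, A u)
    (hHpd : ∀ t ≤ n, (H t).PosDef)
    (K : ℕ → Set (Fin d → ℝ))
    (hKconv : ∀ t, Convex ℝ (K t)) (hKne : ∀ t, (K t).Nonempty)
    (hKclosed : ∀ t, IsClosed (K t)) (hKanti : ∀ s t, s ≤ t → K t ⊆ K s)
    (x : ℕ → Fin d → ℝ)
    (hxmem : ∀ t < n, x t ∈ K t)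
    (hxmin : ∀ t < n, ∀ y ∈ K t, Φ t (x t) ≤ Φ t y)
    (xs : Fin d → ℝ) (hxs : xs ∈ K n) :
    η * ∑ t ∈ range n, (q t (x t) - q t xs) ≤
      (xs ⬝ᵥ xs) / (2 * σ ^ 2) +
        2 * η ^ 2 * ∑ t ∈ range n,
          (g t + (A t).mulVec (x t)) ⬝ᵥ ((H (t + 1))⁻¹).mulVec (g t + (A t).mulVec (x t)) :=
  statement10_general σ η c g A hAsymm q hq Φ hΦ H hH hHpd K hKconv hKanti x hxmem hxmin xs hxs
end

section
/- Let X_1,…,X_n be non-negative random variables adapted to a filtration (F_t), let τ be a stopping time, and let ν > 0 satisfy ν·X_t ≤ 1 almost surely for all t. Then with probability at least 1 − δ: Σ_{t=1}^τ X_t ≤ 2·Σ_{t=1}^τ E[X_t | F_{t-1}] + log(1/δ)/ν. -/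
/-!
With `S_t = ∑_{s ≤ t} X_s` and compensator `A_t = ∑_{s ≤ t} E[X_s | F_{s-1}]`, the process
`Z_t = exp (ν S_t - 2ν A_t)` is a positive supermartingale with `Z_0 = 1`. Indeed the
`F_t`-measurable factor of `Z_{t+1}` comes out of the conditional expectation, and since
`e^y ≤ 1 + 2y` on `[0, 1]`,
`E[exp (ν X_{t+1}) | F_t] ≤ 1 + 2ν E[X_{t+1} | F_t] ≤ exp (2ν E[X_{t+1} | F_t])`.
Optional stopping at the bounded time `τ` gives `E[Z_τ] ≤ 1`, so by Markov's inequality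
`Z_τ < 1/δ` with probability at least `1 - δ`; taking logarithms gives the bound.
-/

open MeasureTheory Finset

open Real

theorem Real.exp_le_one_add_two_mul {y : ℝ} (hy₀ : 0 ≤ y) (hy₁ : y ≤ 1) :
    exp y ≤ 1 + 2 * y := by
  have hchord := convexOn_exp.2 (Set.mem_univ 0) (Set.mem_univ 1) (sub_nonneg.2 hy₁) hy₀
    (sub_add_cancel 1 y)
  simp only [smul_eq_mul, mul_zero, mul_one, zero_add, exp_zero] at hchord
  nlinarith [exp_one_lt_d9]

namespace MeasureTheory

section CondExp

variable {Ω : Type*} {m m₀ : MeasurableSpace Ω} {μ : Measure Ω} [IsFiniteMeasure μ]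

theorem integrable_exp_of_ae_le {f : Ω → ℝ} (hf : AEStronglyMeasurable f μ) {c : ℝ}
    (hfc : ∀ᵐ ω ∂μ, f ω ≤ c) : Integrable (fun ω => exp (f ω)) μ := by
  refine (integrable_const (exp c)).mono' (continuous_exp.comp_aestronglyMeasurable hf) ?_
  filter_upwards [hfc] with ω hω
  rw [norm_of_nonneg (exp_pos _).le]
  exact exp_le_exp.2 hω

theorem condExp_exp_mul_le (hm : m ≤ m₀) {X : Ω → ℝ} (hX : Integrable X μ)
    (hX₀ : 0 ≤ᵐ[μ] X) {ν : ℝ} (hν : 0 ≤ ν) (hνX : ∀ᵐ ω ∂μ, ν * X ω ≤ 1) :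
    μ[fun ω => exp (ν * X ω) | m] ≤ᵐ[μ] fun ω => exp (2 * ν * μ[X | m] ω) := by
  have hlin :
      μ[fun ω => exp (ν * X ω) | m] ≤ᵐ[μ] μ[((fun _ => (1 : ℝ)) + (2 * ν) • X) | m] :=
    condExp_mono (integrable_exp_of_ae_le (hX.1.const_mul ν) hνX)
      ((integrable_const 1).add (hX.smul (2 * ν))) <| by
        filter_upwards [hX₀, hνX] with ω h₀ h₁
        simpa [mul_assoc] using exp_le_one_add_two_mul (mul_nonneg hν h₀) h₁
  have hcond :
      μ[((fun _ => (1 : ℝ)) + (2 * ν) • X) | m] =ᵐ[μ] fun ω => 1 + 2 * ν * μ[X | m] ω := by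
    filter_upwards [condExp_add (integrable_const 1) (hX.smul (2 * ν)) m,
      condExp_smul (μ := μ) (m := m) (2 * ν) X] with ω hadd hsmul
    simp [hadd, hsmul, condExp_const hm]
  filter_upwards [hlin, hcond] with ω h₁ h₂
  linarith [add_one_le_exp (2 * ν * μ[X | m] ω)]

end CondExp

section ExpCompensatedSum

variable {Ω : Type*} {m₀ : MeasurableSpace Ω} {P : Measure Ω} {ℱ : Filtration ℕ m₀}
  {X : ℕ → Ω → ℝ} {ν : ℝ}

variable (P ℱ X ν) in
noncomputable def expCompensatedSum (t : ℕ) (ω : Ω) : ℝ :=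
  exp (ν * ∑ s ∈ Icc 1 t, X s ω - 2 * ν * ∑ s ∈ Icc 1 t, P[X s | ℱ (s - 1)] ω)

theorem expCompensatedSum_pos (t : ℕ) (ω : Ω) : 0 < expCompensatedSum P ℱ X ν t ω :=
  exp_pos _

@[simp]
theorem expCompensatedSum_zero (ω : Ω) : expCompensatedSum P ℱ X ν 0 ω = 1 := by
  simp [expCompensatedSum]

theorem expCompensatedSum_succ (t : ℕ) (ω : Ω) :
    expCompensatedSum P ℱ X ν (t + 1) ω =
      expCompensatedSum P ℱ X ν t ω * exp (-(2 * ν) * P[X (t + 1) | ℱ t] ω) *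
        exp (ν * X (t + 1) ω) := by
  simp only [expCompensatedSum, ← exp_add]
  rw [sum_Icc_succ_top (Nat.le_add_left 1 t), sum_Icc_succ_top (Nat.le_add_left 1 t),
    Nat.add_sub_cancel]
  ring_nf

theorem stronglyAdapted_expCompensatedSum (hX : Adapted ℱ X) :
    StronglyAdapted ℱ (expCompensatedSum P ℱ X ν) := fun t => by
  have hS : StronglyMeasurable[ℱ t] fun ω => ∑ s ∈ Icc 1 t, X s ω :=
    stronglyMeasurable_fun_sum _ fun s hs =>
      (hX.measurable_le (mem_Icc.1 hs).2).stronglyMeasurable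
  have hA : StronglyMeasurable[ℱ t] fun ω => ∑ s ∈ Icc 1 t, P[X s | ℱ (s - 1)] ω :=
    stronglyMeasurable_fun_sum _ fun s hs =>
      stronglyMeasurable_condExp.mono (ℱ.mono ((Nat.sub_le s 1).trans (mem_Icc.1 hs).2))
  exact continuous_exp.comp_stronglyMeasurable ((hS.const_mul ν).sub (hA.const_mul (2 * ν)))

theorem expCompensatedSum_le_exp (hX₀ : ∀ t, 0 ≤ᵐ[P] X t) (hν : 0 ≤ ν)
    (hνX : ∀ t, ∀ᵐ ω ∂P, ν * X t ω ≤ 1) (t : ℕ) :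
    ∀ᵐ ω ∂P, expCompensatedSum P ℱ X ν t ω ≤ exp t := by
  have hcondExp₀ : ∀ᵐ ω ∂P, ∀ s, 0 ≤ P[X s | ℱ (s - 1)] ω :=
    ae_all_iff.2 fun s => condExp_nonneg (hX₀ s)
  filter_upwards [ae_all_iff.2 hνX, hcondExp₀] with ω hνXω hcondExpω
  have hS : ν * ∑ s ∈ Icc 1 t, X s ω ≤ t := by
    simpa [mul_sum] using sum_le_sum fun s (_ : s ∈ Icc 1 t) => hνXω s
  have hA : 0 ≤ ∑ s ∈ Icc 1 t, P[X s | ℱ (s - 1)] ω := sum_nonneg fun s _ => hcondExpω s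
  exact exp_le_exp.2 (by nlinarith)

variable [IsFiniteMeasure P]

theorem integrable_expCompensatedSum (hX : Adapted ℱ X) (hX₀ : ∀ t, 0 ≤ᵐ[P] X t)
    (hν : 0 ≤ ν) (hνX : ∀ t, ∀ᵐ ω ∂P, ν * X t ω ≤ 1) (t : ℕ) :
    Integrable (expCompensatedSum P ℱ X ν t) P := by
  refine .of_bound
    (stronglyAdapted_expCompensatedSum hX).stronglyMeasurable.aestronglyMeasurable (exp t) ?_
  filter_upwards [expCompensatedSum_le_exp hX₀ hν hνX t] with ω hω
  rwa [norm_of_nonneg (expCompensatedSum_pos t ω).le]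

theorem condExp_expCompensatedSum_succ_le (hX : Adapted ℱ X) (hXi : ∀ t, Integrable (X t) P)
    (hX₀ : ∀ t, 0 ≤ᵐ[P] X t) (hν : 0 ≤ ν) (hνX : ∀ t, ∀ᵐ ω ∂P, ν * X t ω ≤ 1) (t : ℕ) :
    P[expCompensatedSum P ℱ X ν (t + 1) | ℱ t] ≤ᵐ[P] expCompensatedSum P ℱ X ν t := by
  set c := P[X (t + 1) | ℱ t]
  set F : Ω → ℝ := fun ω => expCompensatedSum P ℱ X ν t ω * exp (-(2 * ν) * c ω)
  have hF : StronglyMeasurable[ℱ t] F :=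
    (stronglyAdapted_expCompensatedSum hX t).mul
      (continuous_exp.comp_stronglyMeasurable (stronglyMeasurable_condExp.const_mul _))
  have hF_le : ∀ᵐ ω ∂P, ‖F ω‖ ≤ exp t := by
    filter_upwards [expCompensatedSum_le_exp (ℱ := ℱ) hX₀ hν hνX t,
      condExp_nonneg (m := ℱ t) (hX₀ (t + 1))] with ω hZt hc
    have hexp : exp (-(2 * ν) * c ω) ≤ 1 :=
      exp_le_one_iff.2 (mul_nonpos_of_nonpos_of_nonneg (by linarith) hc)
    rw [norm_of_nonneg (mul_pos (expCompensatedSum_pos t ω) (exp_pos _)).le]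
    exact (mul_le_of_le_one_right (expCompensatedSum_pos t ω).le hexp).trans hZt
  have hG : Integrable (fun ω => exp (ν * X (t + 1) ω)) P :=
    integrable_exp_of_ae_le ((hXi _).1.const_mul ν) (hνX _)
  have hZ : expCompensatedSum P ℱ X ν (t + 1) = F * fun ω => exp (ν * X (t + 1) ω) :=
    funext (expCompensatedSum_succ t)
  filter_upwards [hZ ▸ condExp_stronglyMeasurable_mul_of_bound (ℱ.le t) hF hG _ hF_le,
    condExp_exp_mul_le (ℱ.le t) (hXi _) (hX₀ _) hν (hνX _)] with ω hpull hmgf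
  calc P[expCompensatedSum P ℱ X ν (t + 1) | ℱ t] ω
      = F ω * P[fun ω => exp (ν * X (t + 1) ω) | ℱ t] ω := hpull
    _ ≤ F ω * exp (2 * ν * c ω) :=
      mul_le_mul_of_nonneg_left hmgf (mul_pos (expCompensatedSum_pos t ω) (exp_pos _)).le
    _ = expCompensatedSum P ℱ X ν t ω := by
      rw [mul_assoc, ← exp_add, neg_mul, neg_add_cancel, exp_zero, mul_one]

theorem supermartingale_expCompensatedSum (hX : Adapted ℱ X) (hXi : ∀ t, Integrable (X t) P)
    (hX₀ : ∀ t, 0 ≤ᵐ[P] X t) (hν : 0 ≤ ν) (hνX : ∀ t, ∀ᵐ ω ∂P, ν * X t ω ≤ 1) :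
    Supermartingale (expCompensatedSum P ℱ X ν) ℱ P :=
  supermartingale_nat (stronglyAdapted_expCompensatedSum hX)
    (integrable_expCompensatedSum hX hX₀ hν hνX)
    (condExp_expCompensatedSum_succ_le hX hXi hX₀ hν hνX)

end ExpCompensatedSum

theorem Supermartingale.mul_measureReal_stoppedValue_ge_le {Ω : Type*}
    {m₀ : MeasurableSpace Ω} {P : Measure Ω} {ℱ : Filtration ℕ m₀} [SigmaFiniteFiltration P ℱ]
    {Z : ℕ → Ω → ℝ} (hZ : Supermartingale Z ℱ P) (hZ₀ : ∀ t ω, 0 ≤ Z t ω) {τ : Ω → ℕ∞}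
    (hτ : IsStoppingTime ℱ τ) {n : ℕ} (hτn : ∀ ω, τ ω ≤ n) (ε : ℝ) :
    ε * P.real {ω | ε ≤ stoppedValue Z τ ω} ≤ ∫ ω, Z 0 ω ∂P := by
  have hstop : ∫ ω, stoppedValue Z τ ω ∂P ≤ ∫ ω, Z 0 ω ∂P := by
    have := hZ.neg.expected_stoppedValue_mono (isStoppingTime_const ℱ 0) hτ
      (fun _ => zero_le) hτn
    simpa [stoppedValue, integral_neg] using this
  exact (mul_meas_ge_le_integral_of_nonneg (ae_of_all _ fun ω => hZ₀ _ ω)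
    (integrable_stoppedValue ℕ hτ hZ.integrable hτn) ε).trans hstop

theorem ofReal_one_sub_le_measure_compl {Ω : Type*} {m₀ : MeasurableSpace Ω}
    {μ : Measure Ω} [IsProbabilityMeasure μ] {s : Set Ω} {δ : ℝ} (hs : μ.real s ≤ δ) :
    ENNReal.ofReal (1 - δ) ≤ μ sᶜ := by
  have hδ : 0 ≤ δ := measureReal_nonneg.trans hs
  rw [ENNReal.ofReal_sub _ hδ, ENNReal.ofReal_one, tsub_le_iff_left, ← measure_univ (μ := μ)]
  refine (measure_univ_le_add_compl s).trans (add_le_add_left ?_ _)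
  rw [← ofReal_measureReal]
  exact ENNReal.ofReal_le_ofReal hs

end MeasureTheory

/-- Multiplicative Bernstein-type inequality: for adapted non-negative random
variables `X_1, …, X_n` with `ν · X_t ≤ 1` a.s. and a stopping time `τ ≤ n`,
with probability at least `1 - δ`,
`Σ_{t=1}^τ X_t ≤ 2 Σ_{t=1}^τ E[X_t | F_{t-1}] + log(1/δ)/ν`. -/
theorem statement15 {Ω : Type*} {m0 : MeasurableSpace Ω} (P : Measure Ω)
    [IsProbabilityMeasure P] (n : ℕ) (ℱ : Filtration ℕ m0)
    (X : ℕ → Ω → ℝ) (hadapted : Adapted ℱ X)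
    (hint : ∀ t, Integrable (X t) P)
    (hnonneg : ∀ t, ∀ ω, 0 ≤ X t ω)
    (ν : ℝ) (hν : 0 < ν) (hbound : ∀ t, ∀ᵐ ω ∂P, ν * X t ω ≤ 1)
    (τ : Ω → ℕ) (hτ : IsStoppingTime ℱ (fun ω => (τ ω : WithTop ℕ))) (hτn : ∀ ω, τ ω ≤ n)
    (δ : ℝ) (hδ : δ ∈ Set.Ioo (0 : ℝ) 1) :
    ENNReal.ofReal (1 - δ) ≤
      P {ω | ∑ t ∈ Icc 1 (τ ω), X t ω ≤
        2 * ∑ t ∈ Icc 1 (τ ω), (P[X t | ℱ (t - 1)]) ω + Real.log (1 / δ) / ν} := by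
  have hZ := supermartingale_expCompensatedSum hadapted hint
    (fun t => ae_of_all _ (hnonneg t)) hν.le hbound
  have hmarkov := hZ.mul_measureReal_stoppedValue_ge_le
    (fun t ω => (expCompensatedSum_pos t ω).le) hτ (fun ω => WithTop.coe_le_coe.2 (hτn ω)) δ⁻¹
  simp only [expCompensatedSum_zero, integral_const, probReal_univ, one_smul] at hmarkov
  rw [inv_mul_le_iff₀ hδ.1, mul_one] at hmarkov
  refine (ofReal_one_sub_le_measure_compl hmarkov).trans (measure_mono fun ω hω => ?_)
  have hZτ : expCompensatedSum P ℱ X ν (τ ω) ω < δ⁻¹ := not_le.1 hω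
  rw [expCompensatedSum, ← lt_log_iff_exp_lt (inv_pos.2 hδ.1)] at hZτ
  rw [Set.mem_ofPred_eq, ← sub_le_iff_le_add', le_div_iff₀ hν, one_div]
  linarith
end

section
/- Let K be a convex body in R^d with B(1) ⊆ K ⊆ B(2(d+1)), ε ∈ (0,1/2), and ℓ : K → [0,1] convex with Lipschitz constant at most 1/ε on (1-ε)K. Then the extension f(x) = π̄(x)·ℓ(x/π̄(x)) + 2(π̄(x)−1)/ε, with π̄(x) = max(1, π(x)/(1−ε)), has Lipschitz constant at most 15d/ε on R^d. -/
open Metric Set Pointwise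

set_option maxHeartbeats 1000000 in
/-- If `B(1) ⊆ K ⊆ B(2(d+1))`, `ε ∈ (0,1/2)` and `ℓ : K → [0,1]` is convex
and `(1/ε)`-Lipschitz on `(1-ε)K`, then the extension
`f(x) = π̄(x)·ℓ(x/π̄(x)) + 2(π̄(x)-1)/ε`, `π̄(x) = max 1 (gauge K x/(1-ε))`,
is `(15 d / ε)`-Lipschitz on `ℝ^d`. -/
theorem statement17 {d : ℕ} (K : Set (EuclideanSpace ℝ (Fin d)))
    (hKcomp : IsCompact K) (hKconv : Convex ℝ K)
    (hKint : (interior K).Nonempty)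
    (hKball : closedBall (0 : EuclideanSpace ℝ (Fin d)) 1 ⊆ K)
    (hKbound : K ⊆ closedBall (0 : EuclideanSpace ℝ (Fin d)) (2 * (d + 1)))
    (ε : ℝ) (hε : ε ∈ Set.Ioo (0 : ℝ) (1/2))
    (ℓ : EuclideanSpace ℝ (Fin d) → ℝ)
    (hℓconv : ConvexOn ℝ K ℓ) (hℓ01 : ∀ x ∈ K, ℓ x ∈ Set.Icc (0 : ℝ) 1)
    (hℓlip : ∀ x ∈ (1 - ε) • K, ∀ y ∈ (1 - ε) • K, |ℓ x - ℓ y| ≤ (1/ε) * ‖x - y‖)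
    (f : EuclideanSpace ℝ (Fin d) → ℝ)
    (hf : ∀ x, f x = (max 1 (gauge K x / (1 - ε))) * ℓ ((max 1 (gauge K x / (1 - ε)))⁻¹ • x)
        + 2 * (max 1 (gauge K x / (1 - ε)) - 1) / ε) :
    ∀ x y, |f x - f y| ≤ (15 * d / ε) * ‖x - y‖ := by
  obtain ⟨hε0, hε2⟩ := hε
  intro x y
  rcases Nat.eq_zero_or_pos d with hd | hd
  · subst hd
    have : x = y := Subsingleton.elim x y
    subst this
    simp
  have hd1 : (1 : ℝ) ≤ d := by exact_mod_cast hd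
  have hε1 : (0:ℝ) < 1 - ε := by linarith
  have hKcl : IsClosed K := hKcomp.isClosed
  have hball : Metric.ball (0 : EuclideanSpace ℝ (Fin d)) 1 ⊆ K :=
    ball_subset_closedBall.trans hKball
  have habsb : Absorbent ℝ (Metric.ball (0 : EuclideanSpace ℝ (Fin d)) 1) :=
    absorbent_ball_zero one_pos
  have habs : Absorbent ℝ K := habsb.mono hball
  -- gauge is 1-Lipschitz
  have hgLip : ∀ a b : EuclideanSpace ℝ (Fin d), gauge K a ≤ gauge K b + ‖a - b‖ := by
    intro a b
    have h1 : gauge K (a - b) ≤ ‖a - b‖ := by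
      have := gauge_mono habsb hball (a - b)
      rwa [gauge_ball zero_le_one, div_one] at this
    calc gauge K a = gauge K (b + (a - b)) := by rw [add_sub_cancel]
      _ ≤ gauge K b + gauge K (a - b) := gauge_add_le hKconv habs _ _
      _ ≤ gauge K b + ‖a - b‖ := by linarith
  have hgabs : ∀ a b : EuclideanSpace ℝ (Fin d), |gauge K a - gauge K b| ≤ ‖a - b‖ := by
    intro a b
    rw [abs_sub_le_iff]
    refine ⟨by linarith [hgLip a b], ?_⟩
    have := hgLip b a
    rw [norm_sub_rev] at this
    linarith
  -- gauge lower bound from outer ball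
  have hglow : ∀ a : EuclideanSpace ℝ (Fin d), ‖a‖ / (2 * (d + 1)) ≤ gauge K a := by
    intro a
    exact le_gauge_of_subset_closedBall habs (by positivity) hKbound
  -- membership from gauge ≤ 1
  have hmem : ∀ a : EuclideanSpace ℝ (Fin d), gauge K a ≤ 1 → a ∈ K := by
    intro a ha
    have hnhds : K ∈ nhds (0 : EuclideanSpace ℝ (Fin d)) :=
      Filter.mem_of_superset (Metric.ball_mem_nhds 0 one_pos) hball
    have := (gauge_le_one_iff_mem_closure hKconv hnhds).1 ha
    rwa [hKcl.closure_eq] at this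
  set A := max 1 (gauge K x / (1 - ε)) with hA
  set B := max 1 (gauge K y / (1 - ε)) with hB
  have hA1 : 1 ≤ A := le_max_left _ _
  have hB1 : 1 ≤ B := le_max_left _ _
  have hA0 : (0:ℝ) < A := lt_of_lt_of_le one_pos hA1
  have hB0 : (0:ℝ) < B := lt_of_lt_of_le one_pos hB1
  have hgxA : gauge K x ≤ (1 - ε) * A := by
    have h := le_max_right 1 (gauge K x / (1 - ε))
    rw [div_le_iff₀ hε1] at h
    rw [← hA] at h
    linarith
  have hgyB : gauge K y ≤ (1 - ε) * B := by
    have h := le_max_right 1 (gauge K y / (1 - ε))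
    rw [div_le_iff₀ hε1] at h
    rw [← hB] at h
    linarith
  -- |A - B| ≤ 2‖x-y‖
  have hABdiff : |A - B| ≤ 2 * ‖x - y‖ := by
    have h1 : |A - B| ≤ |gauge K x / (1 - ε) - gauge K y / (1 - ε)| := by
      rw [hA, hB, max_comm 1 (gauge K x / (1 - ε)), max_comm 1 (gauge K y / (1 - ε))]
      exact abs_max_sub_max_le_abs _ _ _
    have h2 : |gauge K x / (1 - ε) - gauge K y / (1 - ε)|
        = |gauge K x - gauge K y| / (1 - ε) := by
      rw [div_sub_div_same, abs_div, abs_of_pos hε1]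
    have h3 : |gauge K x - gauge K y| / (1 - ε) ≤ 2 * ‖x - y‖ := by
      rw [div_le_iff₀ hε1]
      have h4 := hgabs x y
      nlinarith [norm_nonneg (x - y)]
    calc |A - B| ≤ |gauge K x / (1 - ε) - gauge K y / (1 - ε)| := h1
      _ = |gauge K x - gauge K y| / (1 - ε) := h2
      _ ≤ 2 * ‖x - y‖ := h3
  -- the rescaled points
  set ux := A⁻¹ • x with hux
  set uy := B⁻¹ • y with huy
  have hmemK : ∀ (C : ℝ) (a : EuclideanSpace ℝ (Fin d)), 1 ≤ C → gauge K a ≤ (1 - ε) * C →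
      C⁻¹ • a ∈ (1 - ε) • K ∧ C⁻¹ • a ∈ K := by
    intro C a hC hga
    have hC0 : (0:ℝ) < C := lt_of_lt_of_le one_pos hC
    have hg : gauge K (C⁻¹ • a) ≤ 1 - ε := by
      rw [gauge_smul_of_nonneg (by positivity : (0:ℝ) ≤ C⁻¹), smul_eq_mul,
        inv_mul_le_iff₀ hC0]
      linarith [hga]
    refine ⟨?_, hmem _ (hg.trans (by linarith))⟩
    rw [Set.mem_smul_set_iff_inv_smul_mem₀ (ne_of_gt hε1)]
    apply hmem
    rw [gauge_smul_of_nonneg (by positivity : (0:ℝ) ≤ (1 - ε)⁻¹), smul_eq_mul,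
      inv_mul_le_iff₀ hε1, mul_one]
    exact hg
  obtain ⟨huxs, huxK⟩ := hmemK A x hA1 hgxA
  obtain ⟨huys, huyK⟩ := hmemK B y hB1 hgyB
  obtain ⟨hℓux0, hℓux1⟩ := hℓ01 _ huxK
  obtain ⟨hℓuy0, hℓuy1⟩ := hℓ01 _ huyK
  -- bound on ‖y‖
  have hyB : ‖y‖ ≤ 2 * (d + 1) * B := by
    have h1 := hglow y
    rw [div_le_iff₀ (by positivity : (0:ℝ) < 2 * (d + 1))] at h1
    have h2 : gauge K y * (2 * (d + 1)) ≤ ((1 - ε) * B) * (2 * (d + 1)) :=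
      mul_le_mul_of_nonneg_right hgyB (by positivity)
    nlinarith [mul_nonneg (mul_nonneg hε0.le hB0.le)
      (by positivity : (0:ℝ) ≤ 2 * ((d:ℝ) + 1))]
  have hkey : A * ‖ux - uy‖ ≤ ‖x - y‖ + (2 * (d + 1)) * |A - B| := by
    have hsm : A • (ux - uy) = (x - y) + (1 - A / B) • y := by
      rw [hux, huy, div_eq_mul_inv, smul_sub, smul_smul, smul_smul,
        mul_inv_cancel₀ (ne_of_gt hA0), one_smul, sub_smul, one_smul]
      abel
    have h1 : A * ‖ux - uy‖ = ‖(x - y) + (1 - A / B) • y‖ := by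
      rw [← hsm, norm_smul, Real.norm_eq_abs, abs_of_pos hA0]
    rw [h1]
    have h2 : |1 - A / B| = |B - A| / B := by
      have he : 1 - A / B = (B - A) / B := by field_simp
      rw [he, abs_div, abs_of_pos hB0]
    calc ‖(x - y) + (1 - A / B) • y‖ ≤ ‖x - y‖ + ‖(1 - A / B) • y‖ := norm_add_le _ _
      _ = ‖x - y‖ + |1 - A / B| * ‖y‖ := by rw [norm_smul, Real.norm_eq_abs]
      _ ≤ ‖x - y‖ + (2 * (d + 1)) * |A - B| := by
          have h3 : |1 - A / B| * ‖y‖ ≤ (|B - A| / B) * (2 * (d + 1) * B) := by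
            rw [h2]
            exact mul_le_mul_of_nonneg_left hyB (by positivity)
          have h4 : (|B - A| / B) * (2 * (d + 1) * B) = 2 * (d + 1) * |A - B| := by
            rw [abs_sub_comm B A]
            field_simp
          linarith [h3, h4.le]
  -- Lipschitz bound on ℓ part
  have hℓd : |ℓ ux - ℓ uy| ≤ (1 / ε) * ‖ux - uy‖ := hℓlip _ huxs _ huys
  -- put it together
  have hfx := hf x
  have hfy := hf y
  rw [← hA, ← hux] at hfx
  rw [← hB, ← huy] at hfy
  have hdecomp : f x - f y = (A - B) * (ℓ uy + 2 / ε) + A * (ℓ ux - ℓ uy) := by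
    rw [hfx, hfy]
    field_simp
    ring
  rw [hdecomp]
  have hT1 : |(A - B) * (ℓ uy + 2 / ε)| ≤ 2 * ‖x - y‖ * (1 + 2 / ε) := by
    rw [abs_mul]
    have h1 : |ℓ uy + 2 / ε| ≤ 1 + 2 / ε := by
      rw [abs_of_nonneg (by positivity)]
      linarith
    have h2 : (0:ℝ) ≤ |A - B| := abs_nonneg _
    calc |A - B| * |ℓ uy + 2 / ε| ≤ (2 * ‖x - y‖) * (1 + 2 / ε) := by
          apply mul_le_mul hABdiff h1 (abs_nonneg _) (by positivity)
      _ = 2 * ‖x - y‖ * (1 + 2 / ε) := by ring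
  have hT2 : |A * (ℓ ux - ℓ uy)| ≤ (1 / ε) * (‖x - y‖ + (2 * (d + 1)) * (2 * ‖x - y‖)) := by
    rw [abs_mul, abs_of_pos hA0]
    calc A * |ℓ ux - ℓ uy| ≤ A * ((1 / ε) * ‖ux - uy‖) :=
          mul_le_mul_of_nonneg_left hℓd hA0.le
      _ = (1 / ε) * (A * ‖ux - uy‖) := by ring
      _ ≤ (1 / ε) * (‖x - y‖ + (2 * (d + 1)) * |A - B|) := by
          apply mul_le_mul_of_nonneg_left hkey (by positivity)
      _ ≤ (1 / ε) * (‖x - y‖ + (2 * (d + 1)) * (2 * ‖x - y‖)) := by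
          apply mul_le_mul_of_nonneg_left _ (by positivity)
          have : (0:ℝ) ≤ 2 * (d + 1) := by positivity
          nlinarith [hABdiff]
  calc |(A - B) * (ℓ uy + 2 / ε) + A * (ℓ ux - ℓ uy)|
      ≤ |(A - B) * (ℓ uy + 2 / ε)| + |A * (ℓ ux - ℓ uy)| := abs_add_le _ _
    _ ≤ 2 * ‖x - y‖ * (1 + 2 / ε) + (1 / ε) * (‖x - y‖ + (2 * (d + 1)) * (2 * ‖x - y‖)) := by
        linarith [hT1, hT2]
    _ ≤ (15 * d / ε) * ‖x - y‖ := by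
        have hN := norm_nonneg (x - y)
        have heq : 2 * ‖x - y‖ * (1 + 2 / ε) + (1 / ε) * (‖x - y‖ + (2 * (d + 1)) * (2 * ‖x - y‖))
            = ((9 + 4 * d + 2 * ε) / ε) * ‖x - y‖ := by
          field_simp
          ring
        rw [heq]
        have h9 : (9:ℝ) + 4 * d + 2 * ε ≤ 15 * d := by nlinarith
        gcongr
end
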